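/- arXiv:1511.01478 — 2 statements merged into one kernel-verified Lean document; each statement's English description precedes it below -/
import Mathlib

section
/- Let f_r be the density of a χ_r distribution and M ⊆ [0,∞) a measurable set with ∫_M f_r > 0. If T is a random variable distributed as χ_r truncated to M, then the statistic p = (∫_{M ∩ [T,∞)} f_r) / (∫_M f_r) is uniformly distributed on [0,1], provided M has positive Lebesgue measure. -/
open MeasureTheory Set

/-- Density of the χ_r distribution (chi, not chi-squared). -/
noncomputable def chiPDF (r t : ℝ) : ℝ :=
  if 0 ≤ t then
    t ^ (r - 1) * Real.exp (-(t ^ 2) / 2) / (2 ^ (r / 2 - 1) * Real.Gamma (r / 2))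
  else 0

lemma chiPDF_nonneg (r : ℝ) (hr : 0 < r) (t : ℝ) : 0 ≤ chiPDF r t := by
  unfold chiPDF
  split_ifs with h
  · apply div_nonneg
    · exact mul_nonneg (Real.rpow_nonneg h _) (Real.exp_nonneg _)
    · exact mul_nonneg (Real.rpow_nonneg (by norm_num) _)
        (Real.Gamma_pos_of_pos (by positivity)).le
  · exact le_rfl

lemma chiPDF_measurable (r : ℝ) : Measurable (chiPDF r) := by
  unfold chiPDF
  refine Measurable.ite measurableSet_Ici ?_ measurable_const
  fun_prop

lemma chiPDF_integrable (r : ℝ) (hr : 0 < r) : Integrable (chiPDF r) := by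
  have h1 : IntegrableOn (fun t : ℝ => t ^ (r - 1) * Real.exp (-(1/2 : ℝ) * t ^ 2)) (Ioi 0) :=
    integrableOn_rpow_mul_exp_neg_mul_sq (by norm_num) (by linarith)
  have h2 : IntegrableOn (chiPDF r) (Ioi 0) := by
    refine MeasureTheory.IntegrableOn.congr_fun
      (h1.div_const (2 ^ (r / 2 - 1) * Real.Gamma (r / 2))) ?_ measurableSet_Ioi
    intro t ht
    have ht' : (0:ℝ) ≤ t := le_of_lt (mem_Ioi.mp ht)
    show t ^ (r - 1) * Real.exp (-(1/2 : ℝ) * t ^ 2) / (2 ^ (r / 2 - 1) * Real.Gamma (r / 2)) = _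
    unfold chiPDF
    rw [if_pos ht', show -(1/2 : ℝ) * t ^ 2 = -(t ^ 2) / 2 by ring]
  rw [← integrableOn_univ, ← Iio_union_Ici (a := (0 : ℝ)), integrableOn_union]
  constructor
  · refine (integrableOn_zero).congr_fun ?_ measurableSet_Iio
    intro t ht
    simp [chiPDF, not_le.mpr (mem_Iio.mp ht)]
  · rwa [integrableOn_Ici_iff_integrableOn_Ioi]

theorem truncated_chi_pvalue_uniform
    {Ω : Type*} [MeasurableSpace Ω] (ℙ : Measure Ω) [IsProbabilityMeasure ℙ]
    (r : ℝ) (hr : 0 < r)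
    (M : Set ℝ) (hMmeas : MeasurableSet M) (hMsub : M ⊆ Ici 0)
    (hMpos : 0 < ∫ t in M, chiPDF r t)
    (hMleb : 0 < volume M)
    (T : Ω → ℝ) (hT : Measurable T)
    (hlaw : ∀ B : Set ℝ, MeasurableSet B →
      ℙ {ω | T ω ∈ B} =
        ENNReal.ofReal ((∫ t in B ∩ M, chiPDF r t) / ∫ t in M, chiPDF r t)) :
    Measure.map
        (fun ω => (∫ t in M ∩ Ici (T ω), chiPDF r t) / ∫ t in M, chiPDF r t) ℙ
      = volume.restrict (Icc (0:ℝ) 1) := by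
  have hfnn : ∀ t, 0 ≤ chiPDF r t := chiPDF_nonneg r hr
  have hfint : Integrable (chiPDF r) := chiPDF_integrable r hr
  set f : ℝ → ℝ := chiPDF r with hfdef
  set N : ℝ := ∫ t in M, f t with hNdef
  have hNpos : 0 < N := hMpos
  set f' : ℝ → ℝ := M.indicator f with hf'def
  have hf'int : Integrable f' := hfint.indicator hMmeas
  have hf'nn : ∀ t, 0 ≤ f' t := fun t => Set.indicator_nonneg (fun s _ => hfnn s) t
  have hf'supp : ∀ t, t < 0 → f' t = 0 := by
    intro t ht
    exact Set.indicator_of_notMem (fun hm => absurd (hMsub hm) (not_le.mpr ht)) f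
  set τ : ℝ → ℝ := fun x => ∫ t, (Ici x).indicator f' t with hτdef
  have hind : ∀ x, Integrable ((Ici x).indicator f') :=
    fun x => hf'int.indicator measurableSet_Ici
  have hN' : ∫ t, f' t = N := by rw [hf'def, integral_indicator hMmeas]
  have hτ_eq : ∀ x, τ x = ∫ t in M ∩ Ici x, f t := by
    intro x
    calc τ x = ∫ t, (Ici x ∩ M).indicator f t := by
          simp only [hτdef, hf'def, Set.indicator_indicator]
      _ = ∫ t in Ici x ∩ M, f t := integral_indicator (measurableSet_Ici.inter hMmeas)
      _ = ∫ t in M ∩ Ici x, f t := by rw [inter_comm]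
  have hτ_nonneg : ∀ x, 0 ≤ τ x := fun x =>
    integral_nonneg (fun t => Set.indicator_nonneg (fun s _ => hf'nn s) t)
  have hτ_le : ∀ x, τ x ≤ N := by
    intro x
    rw [← hN']
    exact integral_mono (hind x) hf'int (fun t => Set.indicator_le_self' (fun s _ => hf'nn s) t)
  have hτ_anti : Antitone τ := by
    intro x y hxy
    exact integral_mono (hind y) (hind x)
      (fun t => Set.indicator_le_indicator_of_subset (Ici_subset_Ici.mpr hxy) hf'nn t)
  have hτ_zero : ∀ x ≤ 0, τ x = N := by
    intro x hx
    rw [← hN']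
    apply integral_congr_ae
    filter_upwards with t
    by_cases h : x ≤ t
    · exact Set.indicator_of_mem (mem_Ici.mpr h) f'
    · rw [Set.indicator_of_notMem (fun hmem => h (mem_Ici.mp hmem))]
      exact (hf'supp t (lt_of_lt_of_le (not_le.mp h) hx)).symm
  have hτ_cont : Continuous τ := by
    rw [continuous_iff_continuousAt]
    intro x
    have := tendsto_integral_filter_of_dominated_convergence (μ := volume)
      (F := fun (y : ℝ) (t : ℝ) => (Ici y).indicator f' t) (f := (Ici x).indicator f')
      (bound := fun t => ‖f' t‖) (l := nhds x)
      (Filter.Eventually.of_forall fun y => (hind y).1)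
      (Filter.Eventually.of_forall fun y => Filter.Eventually.of_forall fun t =>
        norm_indicator_le_norm_self f' t)
      hf'int.norm ?_
    · exact this
    · filter_upwards [compl_mem_ae_iff.mpr (measure_singleton x)] with t ht
      have htx : t ≠ x := ht
      rcases lt_or_gt_of_ne htx with h | h
      · have h0 : (Ici x).indicator f' t = 0 :=
          Set.indicator_of_notMem (fun hmem => (not_le.mpr h) (mem_Ici.mp hmem)) f'
        rw [h0]
        refine Filter.Tendsto.congr' ?_ tendsto_const_nhds
        filter_upwards [Ioi_mem_nhds h] with y hy
        exact (Set.indicator_of_notMem (fun hmem => (not_le.mpr hy) (mem_Ici.mp hmem)) f').symm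
      · have h0 : (Ici x).indicator f' t = f' t :=
          Set.indicator_of_mem (mem_Ici.mpr (le_of_lt h)) f'
        rw [h0]
        refine Filter.Tendsto.congr' ?_ tendsto_const_nhds
        filter_upwards [Iio_mem_nhds h] with y hy
        exact (Set.indicator_of_mem (mem_Ici.mpr (le_of_lt hy)) f').symm
  have hτ_top : Filter.Tendsto τ Filter.atTop (nhds 0) := by
    have h0 : (0 : ℝ) = ∫ (_ : ℝ), (0 : ℝ) := by simp
    rw [h0]
    apply tendsto_integral_filter_of_dominated_convergence (μ := volume)
      (F := fun (y : ℝ) (t : ℝ) => (Ici y).indicator f' t) (f := fun _ => (0 : ℝ))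
      (bound := fun t => ‖f' t‖)
      (Filter.Eventually.of_forall fun y => (hind y).1)
      (Filter.Eventually.of_forall fun y => Filter.Eventually.of_forall fun t =>
        norm_indicator_le_norm_self f' t)
      hf'int.norm
    filter_upwards with t
    refine Filter.Tendsto.congr' ?_ tendsto_const_nhds
    filter_upwards [Filter.eventually_gt_atTop t] with y hy
    exact (Set.indicator_of_notMem (fun hmem => (not_le.mpr hy) (mem_Ici.mp hmem)) f').symm
  set G : ℝ → ℝ := fun x => τ x / N with hGdef
  have hGcont : Continuous G := hτ_cont.div_const N
  have hG_nonneg : ∀ x, 0 ≤ G x := fun x => div_nonneg (hτ_nonneg x) hNpos.le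
  have hG_le_one : ∀ x, G x ≤ 1 := fun x => (div_le_one hNpos).mpr (hτ_le x)
  have hG_anti : Antitone G := fun x y h => by
    simp only [hGdef]
    exact (div_le_div_iff_of_pos_right hNpos).mpr (hτ_anti h)
  have hG_one : G 0 = 1 := by
    simp only [hGdef]
    rw [hτ_zero 0 le_rfl, div_self hNpos.ne']
  have hG_top : Filter.Tendsto G Filter.atTop (nhds 0) := by
    have := hτ_top.div_const N
    simpa using this
  have hfun_eq : (fun ω => (∫ t in M ∩ Ici (T ω), f t) / N) = fun ω => G (T ω) := by
    funext ω
    simp only [hGdef, hτ_eq]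
  rw [hfun_eq]
  have hpm : Measurable fun ω => G (T ω) := hGcont.measurable.comp hT
  haveI : IsProbabilityMeasure (Measure.map (fun ω => G (T ω)) ℙ) :=
    Measure.isProbabilityMeasure_map hpm.aemeasurable
  apply Measure.ext_of_Iic
  intro u
  rw [Measure.map_apply hpm measurableSet_Iic,
    Measure.restrict_apply measurableSet_Iic]
  rcases lt_or_ge u 0 with hu | hu
  · have h1 : (fun ω => G (T ω)) ⁻¹' Iic u = ∅ := by
      refine eq_empty_iff_forall_notMem.mpr fun ω h => ?_
      have : G (T ω) ≤ u := h
      linarith [hG_nonneg (T ω)]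
    have h2 : Iic u ∩ Icc (0:ℝ) 1 = ∅ := by
      refine eq_empty_iff_forall_notMem.mpr fun t ht => ?_
      rcases ht with ⟨ht1, ht2, _⟩
      rw [mem_Iic] at ht1
      linarith
    rw [h1, h2, measure_empty, measure_empty]
  rcases le_or_gt 1 u with hu1 | hu1
  · have h1 : (fun ω => G (T ω)) ⁻¹' Iic u = univ :=
      eq_univ_of_forall fun ω => le_trans (hG_le_one (T ω)) hu1
    have h2 : Iic u ∩ Icc (0:ℝ) 1 = Icc 0 1 :=
      inter_eq_self_of_subset_right fun x hx => le_trans hx.2 hu1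
    rw [h1, h2, measure_univ, Real.volume_Icc]
    norm_num
  · set S : Set ℝ := {t : ℝ | G t ≤ u} with hSdef
    have hS_up : ∀ ⦃s t : ℝ⦄, s ∈ S → s ≤ t → t ∈ S :=
      fun s t hs hst => le_trans (hG_anti hst) hs
    by_cases hSne : S.Nonempty
    · have hS_bdd : BddBelow S := by
        refine ⟨0, fun s hs => ?_⟩
        by_contra h
        push_neg at h
        have h0 : (0 : ℝ) ∈ S := hS_up hs (le_of_lt h)
        have : G 0 ≤ u := h0
        rw [hG_one] at this
        linarith
      have hS_closed : IsClosed S := isClosed_le hGcont continuous_const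
      set c := sInf S with hcdef
      have hcS : c ∈ S := hS_closed.csInf_mem hSne hS_bdd
      have hS_eq : S = Ici c := by
        apply Subset.antisymm
        · exact fun s hs => csInf_le hS_bdd hs
        · exact fun t ht => hS_up hcS ht
      have hGc : G c = u := by
        refine le_antisymm hcS ?_
        by_contra h
        push_neg at h
        have hopen : IsOpen {t : ℝ | G t < u} := isOpen_lt hGcont continuous_const
        obtain ⟨ε, hε, hball⟩ := Metric.isOpen_iff.mp hopen c h
        have hmem : c - ε/2 ∈ {t : ℝ | G t < u} := by
          apply hball
          rw [Metric.mem_ball, Real.dist_eq]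
          rw [abs_of_nonpos (by linarith)]
          linarith
        have hmemS : c - ε/2 ∈ S := by
          have hlt : G (c - ε/2) < u := hmem
          rw [hSdef]; exact hlt.le
        have : c ≤ c - ε/2 := csInf_le hS_bdd hmemS
        linarith
      have hpre : (fun ω => G (T ω)) ⁻¹' Iic u = {ω | T ω ∈ Ici c} := by
        ext ω
        simp only [mem_preimage, mem_Iic, mem_setOf_eq]
        constructor
        · intro h
          have : T ω ∈ S := h
          rwa [hS_eq] at this
        · intro h
          have : T ω ∈ S := hS_eq ▸ h
          exact this
      rw [hpre, hlaw (Ici c) measurableSet_Ici]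
      have hIM : (∫ t in Ici c ∩ M, f t) = τ c := by
        rw [inter_comm]; exact (hτ_eq c).symm
      rw [hIM]
      have h2 : Iic u ∩ Icc (0:ℝ) 1 = Icc 0 u := by
        ext t
        simp only [mem_inter_iff, mem_Iic, mem_Icc]
        constructor
        · rintro ⟨h1, h2, _⟩; exact ⟨h2, h1⟩
        · rintro ⟨h1, h2⟩; exact ⟨h2, h1, le_trans h2 hu1.le⟩
      rw [h2, Real.volume_Icc, sub_zero]
      exact congrArg ENNReal.ofReal hGc
    · have hu0 : u = 0 := by
        by_contra h
        have hupos : 0 < u := lt_of_le_of_ne hu (Ne.symm h)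
        obtain ⟨t, ht⟩ := (Filter.Tendsto.eventually_lt_const hupos hG_top).exists
        exact hSne ⟨t, le_of_lt ht⟩
      subst hu0
      have h1 : (fun ω => G (T ω)) ⁻¹' Iic 0 = ∅ :=
        eq_empty_iff_forall_notMem.mpr fun ω h => hSne ⟨T ω, h⟩
      have h2 : Iic (0:ℝ) ∩ Icc 0 1 = {0} := by
        ext t
        simp only [mem_inter_iff, mem_Iic, mem_Icc, mem_singleton_iff]
        constructor
        · rintro ⟨ha, hb, _⟩; linarith
        · rintro rfl; norm_num
      rw [h1, h2, measure_empty, Real.volume_singleton]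
end

section
/- Let P_sub ≤ P_full be orthogonal projections on ℝⁿ, y ∈ ℝⁿ with R₁ = (I − P_sub)y ≠ 0, R₂ = (I − P_full)y ≠ 0, r = ‖R₁‖, c = tr(P_full − P_sub)/tr(I − P_full) > 0, and T = (‖R₁‖² − ‖R₂‖²)/(c‖R₂‖²). Define v_Δ = (R₁ − R₂)/‖R₁ − R₂‖ and v₂ = R₂/‖R₂‖. Then R₁ = g₁(T) v_Δ + g₂(T) v₂ where g₁(t) = r·√(ct/(1+ct)) and g₂(t) = r/√(1+ct). -/
open Set Matrix

/-- Euclidean dot product on real tuples. -/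
def dotp {ι : Type*} [Fintype ι] (v w : ι → ℝ) : ℝ := ∑ i, v i * w i

lemma dotp_eq {ι : Type*} [Fintype ι] (v w : ι → ℝ) : dotp v w = v ⬝ᵥ w := rfl

lemma dotp_self_pos {ι : Type*} [Fintype ι] {v : ι → ℝ} (hv : v ≠ 0) :
    0 < dotp v v := by
  have hnn : 0 ≤ dotp v v := Finset.sum_nonneg fun i _ => mul_self_nonneg _
  rcases hnn.lt_or_eq with h | h
  · exact h
  · exact absurd ((dotProduct_self_eq_zero).mp (by rw [← dotp_eq]; exact h.symm)) hv

theorem residual_direction_decomposition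
    {n : ℕ} (Psub Pfull : Matrix (Fin n) (Fin n) ℝ)
    (hsub_sym : Psub.IsSymm) (hsub_idem : Psub * Psub = Psub)
    (hfull_sym : Pfull.IsSymm) (hfull_idem : Pfull * Pfull = Pfull)
    (hnest : Pfull * Psub = Psub)
    (y : Fin n → ℝ)
    (R1 R2 : Fin n → ℝ)
    (hR1 : R1 = ((1 : Matrix (Fin n) (Fin n) ℝ) - Psub).mulVec y)
    (hR2 : R2 = ((1 : Matrix (Fin n) (Fin n) ℝ) - Pfull).mulVec y)
    (hR1ne : R1 ≠ 0) (hR2ne : R2 ≠ 0) (hΔne : R1 - R2 ≠ 0)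
    (r : ℝ) (hr : r = Real.sqrt (dotp R1 R1))
    (c : ℝ) (hc : c = (Pfull - Psub).trace / ((1 : Matrix (Fin n) (Fin n) ℝ) - Pfull).trace)
    (hcpos : 0 < c)
    (T : ℝ) (hT : T = (dotp R1 R1 - dotp R2 R2) / (c * dotp R2 R2))
    (vΔ v2 : Fin n → ℝ)
    (hvΔ : vΔ = (Real.sqrt (dotp (R1 - R2) (R1 - R2)))⁻¹ • (R1 - R2))
    (hv2 : v2 = (Real.sqrt (dotp R2 R2))⁻¹ • R2)
    (g1 g2 : ℝ → ℝ)
    (hg1 : ∀ t, g1 t = r * Real.sqrt (c * t / (1 + c * t)))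
    (hg2 : ∀ t, g2 t = r / Real.sqrt (1 + c * t)) :
    R1 = g1 T • vΔ + g2 T • v2 := by
  -- Notation
  set Δ : Fin n → ℝ := R1 - R2 with hΔdef
  set a : ℝ := dotp Δ Δ with hadef
  set b : ℝ := dotp R2 R2 with hbdef
  have ha : 0 < a := dotp_self_pos hΔne
  have hb : 0 < b := dotp_self_pos hR2ne
  -- Δ = (Pfull - Psub) y
  have hΔ : Δ = (Pfull - Psub).mulVec y := by
    rw [hΔdef, hR1, hR2]
    rw [Matrix.sub_mulVec, Matrix.sub_mulVec, Matrix.sub_mulVec]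
    abel
  -- orthogonality
  have hPsubPfull : Psub * Pfull = Psub := by
    have := congrArg Matrix.transpose hnest
    rwa [Matrix.transpose_mul, hsub_sym, hfull_sym] at this
  have horth : dotp Δ R2 = 0 := by
    rw [hΔ, hR2, dotp_eq, Matrix.dotProduct_mulVec, ← Matrix.mulVec_transpose,
      Matrix.mulVec_mulVec]
    have h2 : ((1 : Matrix (Fin n) (Fin n) ℝ) - Pfull)ᵀ * (Pfull - Psub) = 0 := by
      have hsym : ((1 : Matrix (Fin n) (Fin n) ℝ) - Pfull)ᵀ = 1 - Pfull := by
        rw [Matrix.transpose_sub, Matrix.transpose_one, hfull_sym]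
      rw [hsym, Matrix.sub_mul, Matrix.mul_sub, Matrix.mul_sub, Matrix.one_mul,
        hfull_idem, hnest]
      simp
    rw [h2]
    simp
  -- Pythagoras
  have hsplit : dotp R1 R1 = a + b := by
    have hR1eq : R1 = Δ + R2 := by rw [hΔdef]; abel
    have horth' : dotp R2 Δ = 0 := by
      rw [dotp_eq, dotProduct_comm, ← dotp_eq]; exact horth
    rw [hR1eq, hadef, hbdef, dotp_eq, dotp_eq, dotp_eq,
      add_dotProduct, dotProduct_add, dotProduct_add,
      ← dotp_eq (R1 - R2) R2, ← dotp_eq R2 (R1 - R2)]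
    rw [show R1 - R2 = Δ from rfl, horth, horth']
    ring
  -- algebra for T
  have hcT : c * T = a / b := by
    rw [hT, hsplit]
    field_simp
    ring
  have h1cT : 1 + c * T = (a + b) / b := by
    rw [hcT]; field_simp; ring
  have habpos : 0 < a + b := by linarith
  -- g1 T = √a
  have hg1T : g1 T = Real.sqrt a := by
    rw [hg1, hr, hsplit, h1cT, hcT]
    rw [show a / b / ((a + b) / b) = a / (a + b) by field_simp]
    rw [Real.sqrt_div ha.le, mul_comm, div_mul_cancel₀ _ (Real.sqrt_pos.mpr habpos).ne']
  -- g2 T = √b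
  have hg2T : g2 T = Real.sqrt b := by
    rw [hg2, hr, hsplit, h1cT, Real.sqrt_div habpos.le]
    rw [div_div_eq_mul_div, mul_comm, mul_div_assoc,
      div_self (Real.sqrt_pos.mpr habpos).ne', mul_one]
  -- conclude
  have hvΔ' : g1 T • vΔ = Δ := by
    rw [hvΔ, hg1T, smul_smul,
      mul_inv_cancel₀ (Real.sqrt_pos.mpr ha).ne', one_smul]
  have hv2' : g2 T • v2 = R2 := by
    rw [hv2, hg2T, smul_smul,
      mul_inv_cancel₀ (Real.sqrt_pos.mpr hb).ne', one_smul]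
  rw [hvΔ', hv2']
  rw [hΔdef]; abel
end
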